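/- arXiv:1507.06101 — 5 statements merged into one kernel-verified Lean document; each statement's English description precedes it below -/
import Mathlib

section
/- Let H be a 2×2 complex matrix whose columns are unit vectors (|h₁₁|²+|h₂₁|² = 1 and |h₁₂|²+|h₂₂|² = 1), and let F be the nonnegative square root of H*H. Then there exist θ ∈ [0, π/4] and a ∈ ℂ with |a| = 1 such that F = [[cos θ, a·sin θ], [conj(a)·sin θ, cos θ]]. -/
/-!
Since the columns of `H` are unit vectors, `Hᴴ * H = [[1, γ], [conj γ, 1]]` with `|γ| ≤ 1` by
Cauchy–Schwarz. Write `γ = a · sin 2θ` with `|a| = 1` and `θ ∈ [0, π/4]`. The matrix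
`G = [[cos θ, a sin θ], [conj a · sin θ, cos θ]]` squares to `Hᴴ * H` by the double-angle formulas,
and it is positive semidefinite because `sin θ ≤ cos θ`. Positive semidefinite square roots are
unique, so `F = G`.
-/

open Matrix Complex Real ComplexOrder

noncomputable def S (z : ℂ) (G : Matrix (Fin 2) (Fin 2) ℂ) : Matrix (Fin 2) (Fin 2) ℂ :=
  G * Matrix.diagonal ![z, z⁻¹] * Gᴴ

noncomputable def L (n : ℕ) (z : ℂ) (G : Matrix (Fin 2) (Fin 2) ℂ) : ℂ :=
  ((S z G) ^ n).trace

noncomputable def Fmat (θ : ℝ) : Matrix (Fin 2) (Fin 2) ℂ :=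
  !![(Real.cos θ : ℂ), (Real.sin θ : ℂ); (Real.sin θ : ℂ), (Real.cos θ : ℂ)]

noncomputable def phaseMatrix (c s : ℝ) (a : ℂ) : Matrix (Fin 2) (Fin 2) ℂ :=
  !![(c : ℂ), a * (s : ℂ); starRingEnd ℂ a * (s : ℂ), (c : ℂ)]

lemma conj_mul_self_of_norm_eq_one {a : ℂ} (ha : ‖a‖ = 1) : starRingEnd ℂ a * a = 1 := by
  rw [conj_mul', ha]; norm_num

lemma phaseMatrix_sq {a : ℂ} (ha : ‖a‖ = 1) (c s : ℝ) :
    phaseMatrix c s a ^ 2 = phaseMatrix (c ^ 2 + s ^ 2) (2 * s * c) a := by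
  have haa := conj_mul_self_of_norm_eq_one ha
  rw [sq, phaseMatrix, phaseMatrix, mul_fin_two]
  ext i j
  fin_cases i <;> fin_cases j <;> simp
  · linear_combination (s : ℂ) ^ 2 * haa
  · ring
  · ring
  · linear_combination (s : ℂ) ^ 2 * haa

lemma phaseMatrix_posSemidef {a : ℂ} (ha : ‖a‖ = 1) {c s : ℝ} (hsc : |s| ≤ c) :
    (phaseMatrix c s a).PosSemidef := by
  have haa := conj_mul_self_of_norm_eq_one ha
  obtain ⟨hs, hs'⟩ := abs_le.1 hsc
  set p : ℝ := √((c + s) / 2)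
  set q : ℝ := √((c - s) / 2)
  have hp : (p : ℂ) ^ 2 = (c + s) / 2 := by
    norm_cast; rw [Real.sq_sqrt (by linarith)]
  have hq : (q : ℂ) ^ 2 = (c - s) / 2 := by
    norm_cast; rw [Real.sq_sqrt (by linarith)]
  -- The rows of `B` are `√(c ± s)` times the conjugated unit eigenvectors `(a, ±1)/√2`.
  let B : Matrix (Fin 2) (Fin 2) ℂ := !![p * starRingEnd ℂ a, p; q * starRingEnd ℂ a, -q]
  have hB : phaseMatrix c s a = Bᴴ * B := by
    rw [phaseMatrix, eta_fin_two Bᴴ, mul_fin_two]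
    ext i j
    fin_cases i <;> fin_cases j <;> simp [B]
    · linear_combination (-a * starRingEnd ℂ a) * (hp + hq) - c * haa
    · linear_combination (-a) * (hp - hq)
    · linear_combination (-starRingEnd ℂ a) * (hp - hq)
    · linear_combination -(hp + hq)
  exact hB ▸ posSemidef_conjTranspose_mul_self B

lemma phaseMatrix_norm_exp_arg (c : ℝ) (γ : ℂ) :
    phaseMatrix c ‖γ‖ (exp (arg γ * I)) = !![(c : ℂ), γ; starRingEnd ℂ γ, c] := by
  have hγ : exp (arg γ * I) * ‖γ‖ = γ := by rw [mul_comm, norm_mul_exp_arg_mul_I]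
  rw [phaseMatrix, hγ, ← conj_ofReal ‖γ‖, ← map_mul, hγ]

lemma norm_conj_mul_add_conj_mul_le_one {x y z w : ℂ} (h1 : ‖x‖ ^ 2 + ‖y‖ ^ 2 = 1)
    (h2 : ‖z‖ ^ 2 + ‖w‖ ^ 2 = 1) : ‖starRingEnd ℂ x * z + starRingEnd ℂ y * w‖ ≤ 1 := by
  calc ‖starRingEnd ℂ x * z + starRingEnd ℂ y * w‖ ≤ ‖x‖ * ‖z‖ + ‖y‖ * ‖w‖ := by
        simpa only [norm_mul, norm_conj] using
          norm_add_le (starRingEnd ℂ x * z) (starRingEnd ℂ y * w)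
    _ ≤ 1 := by nlinarith [sq_nonneg (‖x‖ - ‖z‖), sq_nonneg (‖y‖ - ‖w‖)]

lemma exists_conjTranspose_mul_self_eq_phaseMatrix (H : Matrix (Fin 2) (Fin 2) ℂ)
    (hc1 : ‖H 0 0‖ ^ 2 + ‖H 1 0‖ ^ 2 = 1) (hc2 : ‖H 0 1‖ ^ 2 + ‖H 1 1‖ ^ 2 = 1) :
    ∃ a : ℂ, ‖a‖ = 1 ∧ ∃ r : ℝ, 0 ≤ r ∧ r ≤ 1 ∧ Hᴴ * H = phaseMatrix 1 r a := by
  set γ := starRingEnd ℂ (H 0 0) * H 0 1 + starRingEnd ℂ (H 1 0) * H 1 1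
  refine ⟨exp (arg γ * I), norm_exp_ofReal_mul_I (arg γ), ‖γ‖, norm_nonneg γ,
    norm_conj_mul_add_conj_mul_le_one hc1 hc2, ?_⟩
  rw [phaseMatrix_norm_exp_arg, eta_fin_two (Hᴴ * H)]
  have h00 : (‖H 0 0‖ : ℂ) ^ 2 + ‖H 1 0‖ ^ 2 = 1 := by exact_mod_cast hc1
  have h11 : (‖H 0 1‖ : ℂ) ^ 2 + ‖H 1 1‖ ^ 2 = 1 := by exact_mod_cast hc2
  simp only [Fin.isValue, mul_apply, conjTranspose_apply, RCLike.star_def, conj_mul',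
    Fin.sum_univ_two, h00, h11, ofReal_one, map_add, map_mul, RingHomCompTriple.comp_apply,
    RingHom.id_apply, EmbeddingLike.apply_eq_iff_eq, vecCons_inj, and_true, true_and, γ]
  ring

lemma exists_sin_two_mul_eq {r : ℝ} (hr0 : 0 ≤ r) (hr1 : r ≤ 1) :
    ∃ θ ∈ Set.Icc 0 (Real.pi / 4), Real.sin (2 * θ) = r := by
  refine ⟨Real.arcsin r / 2, ⟨by linarith [Real.arcsin_nonneg.2 hr0],
    by linarith [Real.arcsin_le_pi_div_two r]⟩, ?_⟩
  rw [mul_div_cancel₀ _ two_ne_zero, Real.sin_arcsin (by linarith) hr1]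

lemma abs_sin_le_cos {θ : ℝ} (hθ : θ ∈ Set.Icc 0 (Real.pi / 4)) :
    |Real.sin θ| ≤ Real.cos θ := by
  obtain ⟨h0, h1⟩ := hθ
  have hπ := Real.pi_pos
  have hs : 0 ≤ Real.sin θ := Real.sin_nonneg_of_nonneg_of_le_pi h0 (by linarith)
  have hc : 0 < Real.cos θ := Real.cos_pos_of_mem_Ioo ⟨by linarith, by linarith⟩
  have h2 : 0 ≤ Real.cos (2 * θ) := Real.cos_nonneg_of_mem_Icc ⟨by linarith, by linarith⟩
  rw [Real.cos_two_mul'] at h2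
  rw [abs_of_nonneg hs]
  nlinarith

theorem stmt6 (H F : Matrix (Fin 2) (Fin 2) ℂ)
    (hc1 : ‖H 0 0‖ ^ 2 + ‖H 1 0‖ ^ 2 = 1)
    (hc2 : ‖H 0 1‖ ^ 2 + ‖H 1 1‖ ^ 2 = 1)
    (hF : F.PosSemidef) (hsq : F ^ 2 = Hᴴ * H) :
    ∃ θ ∈ Set.Icc (0 : ℝ) (Real.pi / 4), ∃ a : ℂ, ‖a‖ = 1 ∧
      F = !![(Real.cos θ : ℂ), a * (Real.sin θ : ℂ);
             (starRingEnd ℂ a) * (Real.sin θ : ℂ), (Real.cos θ : ℂ)] := by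
  obtain ⟨a, ha, r, hr0, hr1, hHH⟩ := exists_conjTranspose_mul_self_eq_phaseMatrix H hc1 hc2
  obtain ⟨θ, hθ, hsin⟩ := exists_sin_two_mul_eq hr0 hr1
  have hG : (phaseMatrix (Real.cos θ) (Real.sin θ) a).PosSemidef :=
    phaseMatrix_posSemidef ha (abs_sin_le_cos hθ)
  have hG2 : phaseMatrix (Real.cos θ) (Real.sin θ) a ^ 2 = Hᴴ * H := by
    rw [phaseMatrix_sq ha, Real.cos_sq_add_sin_sq, ← Real.sin_two_mul, hsin, hHH]
  refine ⟨θ, hθ, a, ha, ?_⟩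
  open scoped MatrixOrder in
  exact (CFC.sq_eq_sq_iff F _ hF.nonneg hG.nonneg).1 (hsq.trans hG2.symm)
end

section
/- For every generic 2×2 complex matrix G there exist R > 0, ρ > 0 and θ ∈ [0, π/4] such that for all n ≥ 1 and z ∈ ℂ \ {0}: L_n(z,G) = R^n · L_n(ρ·z, F_θ), where F_θ = [[cos θ, sin θ],[sin θ, cos θ]]. -/
open Matrix Complex Real

/-!
Since `S z G` is a `2 × 2` matrix, Cayley–Hamilton makes the traces of its powers functions of
its trace `α z + β z⁻¹` (with `α`, `β` the squared norms of the columns of `G`) and of its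
determinant `‖det G‖²`. For `F_θ` these invariants are `w + w⁻¹` and `cos² 2θ`, so it suffices to
match them: `R = √(αβ)`, `ρ = √(α / β)` and `cos 2θ = ‖det G‖ / R`, which lies in `[0, 1]` by
Hadamard's inequality `‖det G‖² ≤ αβ`.
-/

namespace Matrix

theorem sq_eq_trace_smul_sub_det_smul {R : Type*} [CommRing R] (A : Matrix (Fin 2) (Fin 2) R) :
    A ^ 2 = A.trace • A - A.det • 1 := by
  ext i j
  fin_cases i <;> fin_cases j <;>
    simp [sq, mul_apply, trace_fin_two, det_fin_two] <;> ring

theorem trace_pow_eq_pow_mul_trace_pow {R : Type*} [CommRing R] {A B : Matrix (Fin 2) (Fin 2) R}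
    (c : R) (htr : A.trace = c * B.trace) (hdet : A.det = c ^ 2 * B.det) (n : ℕ) :
    (A ^ n).trace = c ^ n * (B ^ n).trace := by
  have step (M : Matrix (Fin 2) (Fin 2) R) (k : ℕ) :
      (M ^ (k + 2)).trace = M.trace * (M ^ (k + 1)).trace - M.det * (M ^ k).trace := by
    rw [pow_add, sq_eq_trace_smul_sub_det_smul, Matrix.mul_sub, Matrix.mul_smul, Matrix.mul_smul,
      mul_one, ← pow_succ, trace_sub, trace_smul, trace_smul, smul_eq_mul, smul_eq_mul]
  induction n using Nat.strong_induction_on with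
  | _ n ih =>
    match n, ih with
    | 0, _ => simp
    | 1, _ => simpa using htr
    | k + 2, ih =>
      rw [step, step, ih k (by omega), ih (k + 1) (by omega), htr, hdet]
      ring

theorem trace_mul_diagonal_mul_conjTranspose {𝕜 m n : Type*} [RCLike 𝕜] [Fintype m] [Fintype n]
    [DecidableEq n] (G : Matrix m n 𝕜) (d : n → 𝕜) :
    (G * diagonal d * Gᴴ).trace = ∑ j, d j * ∑ i, (‖G i j‖ ^ 2 : 𝕜) := by
  simp only [trace, diag, mul_apply, diagonal_apply, mul_ite, mul_zero, Finset.sum_ite_eq',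
    Finset.mem_univ, if_true, conjTranspose_apply, Finset.mul_sum]
  rw [Finset.sum_comm]
  refine Finset.sum_congr rfl fun j _ => Finset.sum_congr rfl fun i _ => ?_
  rw [← RCLike.mul_conj]
  simp only [RCLike.star_def]
  ring

theorem sq_norm_det_fin_two_le {R : Type*} [NormedCommRing R] (G : Matrix (Fin 2) (Fin 2) R) :
    ‖G.det‖ ^ 2 ≤ (‖G 0 0‖ ^ 2 + ‖G 1 0‖ ^ 2) * (‖G 0 1‖ ^ 2 + ‖G 1 1‖ ^ 2) := by
  have h : ‖G.det‖ ≤ ‖G 0 0‖ * ‖G 1 1‖ + ‖G 0 1‖ * ‖G 1 0‖ := by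
    rw [det_fin_two]
    exact (norm_sub_le _ _).trans (add_le_add (norm_mul_le _ _) (norm_mul_le _ _))
  calc ‖G.det‖ ^ 2 ≤ (‖G 0 0‖ * ‖G 1 1‖ + ‖G 0 1‖ * ‖G 1 0‖) ^ 2 := by gcongr
    _ ≤ _ := by nlinarith [sq_nonneg (‖G 0 0‖ * ‖G 0 1‖ - ‖G 1 0‖ * ‖G 1 1‖)]

end Matrix

theorem trace_S (z : ℂ) (G : Matrix (Fin 2) (Fin 2) ℂ) :
    (S z G).trace = z * ((‖G 0 0‖ ^ 2 + ‖G 1 0‖ ^ 2 : ℝ) : ℂ)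
      + z⁻¹ * ((‖G 0 1‖ ^ 2 + ‖G 1 1‖ ^ 2 : ℝ) : ℂ) := by
  rw [S, trace_mul_diagonal_mul_conjTranspose]
  simp [Fin.sum_univ_two]

theorem det_S {z : ℂ} (hz : z ≠ 0) (G : Matrix (Fin 2) (Fin 2) ℂ) :
    (S z G).det = ((‖G.det‖ ^ 2 : ℝ) : ℂ) := by
  rw [S, det_mul, det_mul, det_conjTranspose, det_diagonal, Fin.prod_univ_two]
  simp [hz, RCLike.star_def, Complex.mul_conj']

theorem trace_S_Fmat (w : ℂ) (θ : ℝ) : (S w (Fmat θ)).trace = w + w⁻¹ := by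
  have h : Real.cos θ ^ 2 + Real.sin θ ^ 2 = 1 := cos_sq_add_sin_sq θ
  rw [trace_S]
  simp [Fmat, -ofReal_cos, -ofReal_sin, h, add_comm (Real.sin θ ^ 2)]

theorem det_Fmat (θ : ℝ) : (Fmat θ).det = (Real.cos (2 * θ) : ℂ) := by
  rw [det_fin_two, Real.cos_two_mul']
  simp [Fmat, -ofReal_cos, -ofReal_sin, sq]

theorem exists_pos_mul_eq_and_mul_inv_eq {α β : ℝ} (hα : 0 < α) (hβ : 0 < β) :
    ∃ R > (0 : ℝ), ∃ ρ > (0 : ℝ), R * ρ = α ∧ R * ρ⁻¹ = β := by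
  refine ⟨√(α * β), by positivity, √(α / β), by positivity, ?_, ?_⟩
  · rw [← Real.sqrt_mul (by positivity), show α * β * (α / β) = α ^ 2 by field_simp,
      Real.sqrt_sq hα.le]
  · rw [← Real.sqrt_inv, ← Real.sqrt_mul (by positivity),
      show α * β * (α / β)⁻¹ = β ^ 2 by field_simp, Real.sqrt_sq hβ.le]

theorem exists_mem_Icc_cos_two_mul_eq {c : ℝ} (hc₀ : 0 ≤ c) (hc₁ : c ≤ 1) :
    ∃ θ ∈ Set.Icc 0 (π / 4), Real.cos (2 * θ) = c := by
  refine ⟨arccos c / 2, ⟨by linarith [arccos_nonneg c], ?_⟩, ?_⟩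
  · linarith [arccos_le_pi_div_two.2 hc₀]
  · rw [mul_div_cancel₀ _ two_ne_zero, cos_arccos (by linarith) hc₁]

theorem stmt9 (G : Matrix (Fin 2) (Fin 2) ℂ)
    (hgen : (‖G 0 0‖ ^ 2 + ‖G 1 0‖ ^ 2) *
            (‖G 0 1‖ ^ 2 + ‖G 1 1‖ ^ 2) ≠ 0) :
    ∃ R > (0 : ℝ), ∃ ρ > (0 : ℝ), ∃ θ ∈ Set.Icc (0 : ℝ) (Real.pi / 4),
      ∀ n : ℕ, 1 ≤ n → ∀ z : ℂ, z ≠ 0 →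
        L n z G = (R : ℂ) ^ n * L n ((ρ : ℂ) * z) (Fmat θ) := by
  have hα : 0 < ‖G 0 0‖ ^ 2 + ‖G 1 0‖ ^ 2 :=
    (add_nonneg (sq_nonneg _) (sq_nonneg _)).lt_of_ne' (left_ne_zero_of_mul hgen)
  have hβ : 0 < ‖G 0 1‖ ^ 2 + ‖G 1 1‖ ^ 2 :=
    (add_nonneg (sq_nonneg _) (sq_nonneg _)).lt_of_ne' (right_ne_zero_of_mul hgen)
  obtain ⟨R, hR, ρ, hρ, hRρ, hRρ'⟩ := exists_pos_mul_eq_and_mul_inv_eq hα hβ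
  have hR2 : R ^ 2 = (‖G 0 0‖ ^ 2 + ‖G 1 0‖ ^ 2) * (‖G 0 1‖ ^ 2 + ‖G 1 1‖ ^ 2) := by
    rw [← hRρ, ← hRρ']; field_simp
  have hdet : ‖G.det‖ ≤ R :=
    (pow_le_pow_iff_left₀ (norm_nonneg _) hR.le two_ne_zero).1 (hR2 ▸ G.sq_norm_det_fin_two_le)
  obtain ⟨θ, hθ, hcos⟩ := exists_mem_Icc_cos_two_mul_eq (c := ‖G.det‖ / R) (by positivity)
    ((div_le_one hR).2 hdet)
  have hR₀ : (R : ℂ) ≠ 0 := ofReal_ne_zero.2 hR.ne'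
  refine ⟨R, hR, ρ, hρ, θ, hθ, fun n _ z hz => trace_pow_eq_pow_mul_trace_pow _ ?_ ?_ n⟩
  · rw [trace_S, trace_S_Fmat, ← hRρ, ← hRρ']
    push_cast
    field_simp
  · rw [det_S hz, det_S (mul_ne_zero (ofReal_ne_zero.2 hρ.ne') hz), det_Fmat, hcos,
      Complex.norm_real, Real.norm_of_nonneg (by positivity)]
    push_cast
    field_simp
end

section
/- For θ ∈ (0, π/4) and every n ≥ 1, the coefficients p_{k,n}(θ) of L_n(z,F_θ) = Σ_{k=-n}^n p_{k,n}(θ) z^k satisfy: p_{k,n}(θ) = 0 when k ≢ n (mod 2) and |k| ≤ n-1, and p_{k,n}(θ) > 0 when k ≡ n (mod 2) and |k| ≤ n-1. -/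
open Matrix Complex Real

/-! The columns `u = (cos θ, sin θ)` and `v = (sin θ, cos θ)` of `F_θ` give
`S = z • u uᵀ + z⁻¹ • v vᵀ`. Expanding `S ^ n`, the matrix coefficient `C n k` of `z ^ k`
satisfies `C (n + 1) k = u uᵀ * C n (k - 1) + v vᵀ * C n (k + 1)`, so it vanishes unless
`|k| ≤ n` and `k ≡ n (mod 2)`, and, as `u uᵀ` and `v vᵀ` have positive entries for
`0 < θ < π / 2`, in those cases (`n ≥ 1`) it has positive entries. Since the characters
`z ↦ z ^ k` of `ℂˣ` are linearly independent, `p k = tr (C n k)`. -/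

open Finset

section LaurentPowCoeff

variable {R : Type*}

def laurentPowCoeff [Semiring R] (a b : R) : ℕ → ℤ → R
  | 0, k => if k = 0 then 1 else 0
  | n + 1, k => a * laurentPowCoeff a b n (k - 1) + b * laurentPowCoeff a b n (k + 1)

variable [Semiring R] (a b : R)

@[simp]
lemma laurentPowCoeff_zero (k : ℤ) : laurentPowCoeff a b 0 k = if k = 0 then 1 else 0 := rfl

lemma laurentPowCoeff_succ (n : ℕ) (k : ℤ) :
    laurentPowCoeff a b (n + 1) k =
      a * laurentPowCoeff a b n (k - 1) + b * laurentPowCoeff a b n (k + 1) := rfl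

lemma laurentPowCoeff_eq_zero_of_lt_abs {n : ℕ} {k : ℤ} (h : (n : ℤ) < |k|) :
    laurentPowCoeff a b n k = 0 := by
  induction n generalizing k with
  | zero => simp_all [abs_pos]
  | succ n ih =>
    rw [lt_abs] at h
    rw [laurentPowCoeff_succ, ih, ih, mul_zero, mul_zero, add_zero] <;> rw [lt_abs] <;> omega

lemma laurentPowCoeff_eq_zero_of_odd {n : ℕ} {k : ℤ} (h : Odd (k - n)) :
    laurentPowCoeff a b n k = 0 := by
  induction n generalizing k with
  | zero =>
    have : k ≠ 0 := by rintro rfl; simp at h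
    simp [this]
  | succ n ih =>
    rw [Int.odd_iff] at h
    rw [laurentPowCoeff_succ, ih, ih, mul_zero, mul_zero, add_zero] <;> rw [Int.odd_iff] <;> omega

lemma map_laurentPowCoeff {T : Type*} [Semiring T] (f : R →+* T) (n : ℕ) (k : ℤ) :
    f (laurentPowCoeff a b n k) = laurentPowCoeff (f a) (f b) n k := by
  induction n generalizing k with
  | zero => by_cases hk : k = 0 <;> simp [hk]
  | succ n ih => simp [laurentPowCoeff_succ, ih]

end LaurentPowCoeff

lemma sum_Icc_comp_add_eq {M : Type*} [AddCommMonoid M] {g : ℤ → M} {n : ℕ}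
    (hg : ∀ k, (n : ℤ) < |k| → g k = 0) {d : ℤ} (hd : |d| ≤ 1) :
    ∑ j ∈ Icc (-(n + 1 : ℤ)) (n + 1), g (j + d) = ∑ k ∈ Icc (-(n : ℤ)) n, g k := by
  have hshift : ∑ j ∈ Icc (-(n + 1 : ℤ)) (n + 1), g (j + d) =
      ∑ k ∈ Icc (-(n + 1 : ℤ) + d) (n + 1 + d), g k := by
    rw [← map_add_right_Icc, sum_map]
    rfl
  rw [abs_le] at hd
  rw [hshift]
  refine (sum_subset (Icc_subset_Icc (by omega) (by omega)) fun k hk hkn => hg k ?_).symm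
  simp only [mem_Icc, not_and_or, not_le] at hk hkn
  rw [lt_abs]
  omega

theorem pow_eq_sum_laurentPowCoeff {K R : Type*} [Field K] [Ring R] [Algebra K R] (a b : R)
    {z : K} (hz : z ≠ 0) (n : ℕ) :
    (z • a + z⁻¹ • b) ^ n = ∑ k ∈ Icc (-(n : ℤ)) n, z ^ k • laurentPowCoeff a b n k := by
  induction n with
  | zero => simp
  | succ n ih =>
    have hvanish (c : R) (e : ℤ) :
        ∀ k, (n : ℤ) < |k| → z ^ (k + e) • (c * laurentPowCoeff a b n k) = 0 :=
      fun k hk => by rw [laurentPowCoeff_eq_zero_of_lt_abs a b hk, mul_zero, smul_zero]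
    calc (z • a + z⁻¹ • b) ^ (n + 1)
        = ∑ k ∈ Icc (-(n : ℤ)) n, (z ^ (k + 1) • (a * laurentPowCoeff a b n k)
            + z ^ (k + -1) • (b * laurentPowCoeff a b n k)) := by
          rw [pow_succ', ih, mul_sum]
          refine sum_congr rfl fun k _ => ?_
          rw [add_mul, smul_mul_assoc, smul_mul_assoc, mul_smul_comm, mul_smul_comm, smul_smul,
            smul_smul, zpow_add_one₀ hz, zpow_add₀ hz, _root_.zpow_neg_one, mul_comm z,
            mul_comm z⁻¹]
      _ = ∑ j ∈ Icc (-(n + 1 : ℤ)) (n + 1),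
            (z ^ (j + -1 + 1) • (a * laurentPowCoeff a b n (j + -1))
              + z ^ (j + 1 + -1) • (b * laurentPowCoeff a b n (j + 1))) := by
          rw [sum_add_distrib, sum_add_distrib,
            sum_Icc_comp_add_eq (hvanish a 1) (d := -1) (by simp),
            sum_Icc_comp_add_eq (hvanish b (-1)) (d := 1) (by simp)]
      _ = _ := by
          push_cast
          refine sum_congr rfl fun j _ => ?_
          rw [laurentPowCoeff_succ, smul_add, neg_add_cancel_right, add_neg_cancel_right,
            sub_eq_add_neg]

namespace Matrix

variable {m α : Type*} [Fintype m] [Semiring α] [PartialOrder α]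

lemma mul_apply_nonneg [IsOrderedRing α] {A B : Matrix m m α} (hA : ∀ i j, 0 ≤ A i j)
    (hB : ∀ i j, 0 ≤ B i j) (i j : m) : 0 ≤ (A * B) i j :=
  sum_nonneg fun l _ => mul_nonneg (hA i l) (hB l j)

lemma mul_apply_pos [Nonempty m] [IsStrictOrderedRing α] {A B : Matrix m m α}
    (hA : ∀ i j, 0 < A i j) (hB : ∀ i j, 0 < B i j) (i j : m) : 0 < (A * B) i j :=
  sum_pos (fun l _ => mul_pos (hA i l) (hB l j)) univ_nonempty

variable [DecidableEq m] {a b : Matrix m m α}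

lemma laurentPowCoeff_apply_nonneg [IsOrderedRing α] (ha : ∀ i j, 0 ≤ a i j)
    (hb : ∀ i j, 0 ≤ b i j) (n : ℕ) (k : ℤ) (i j : m) : 0 ≤ laurentPowCoeff a b n k i j := by
  induction n generalizing k i j with
  | zero => by_cases hk : k = 0 <;> simp [hk, one_apply, apply_ite]
  | succ n ih =>
    rw [laurentPowCoeff_succ, add_apply]
    exact add_nonneg (mul_apply_nonneg ha (ih _) i j) (mul_apply_nonneg hb (ih _) i j)

lemma laurentPowCoeff_apply_pos [Nonempty m] [IsStrictOrderedRing α] (ha : ∀ i j, 0 < a i j)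
    (hb : ∀ i j, 0 < b i j) {n : ℕ} (hn : 1 ≤ n) {k : ℤ} (hk : |k| ≤ n) (hpar : Even (k - n))
    (i j : m) :
    0 < laurentPowCoeff a b n k i j := by
  rw [abs_le] at hk
  rw [Int.even_iff] at hpar
  induction n, hn using Nat.le_induction generalizing k i j with
  | base =>
    obtain rfl | rfl : k = 1 ∨ k = -1 := by omega
    · simpa [laurentPowCoeff_succ] using ha i j
    · simpa [laurentPowCoeff_succ] using hb i j
  | succ n hn ih =>
    rw [laurentPowCoeff_succ, add_apply]
    have hnonneg :=
      laurentPowCoeff_apply_nonneg (fun i j => (ha i j).le) (fun i j => (hb i j).le) n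
    rcases le_or_gt 0 k with hk0 | hk0
    · exact add_pos_of_pos_of_nonneg (mul_apply_pos ha (ih (by omega) (by omega)) i j)
        (mul_apply_nonneg (fun i j => (hb i j).le) (hnonneg _) i j)
    · exact add_pos_of_nonneg_of_pos (mul_apply_nonneg (fun i j => (ha i j).le) (hnonneg _) i j)
        (mul_apply_pos hb (ih (by omega) (by omega)) i j)

end Matrix

lemma eq_of_forall_sum_mul_zpow_eq {s : Finset ℤ} {a b : ℤ → ℂ}
    (h : ∀ z : ℂ, z ≠ 0 → ∑ k ∈ s, a k * z ^ k = ∑ k ∈ s, b k * z ^ k) :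
    ∀ k ∈ s, a k = b k := by
  -- Dedekind: the characters `u ↦ u ^ k` of `ℂˣ` are distinct, hence linearly independent.
  let χ (k : ℤ) : ℂˣ →* ℂ := (Units.coeHom ℂ).comp (zpowGroupHom k)
  have hχ : Function.Injective χ := fun k l hkl => by
    have h2 := congr($hkl (Units.mk0 2 two_ne_zero))
    simp only [χ, MonoidHom.comp_apply, zpowGroupHom_apply, Units.coeHom_apply,
      Units.val_zpow_eq_zpow_val, Units.val_mk0] at h2
    exact zpow_right_injective₀ (by norm_num : (0 : ℝ) < 2) (by norm_num) <|
      Complex.ofReal_injective (by push_cast; exact h2)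
  have hli := (linearIndependent_monoidHom ℂˣ ℂ).comp χ hχ
  intro k hk
  refine sub_eq_zero.mp (linearIndependent_iff'.mp hli s (a - b) ?_ k hk)
  funext u
  simp [χ, sub_mul, sum_sub_distrib, h u u.ne_zero]

noncomputable def cosSinProj (θ : ℝ) : Matrix (Fin 2) (Fin 2) ℝ :=
  vecMulVec ![Real.cos θ, Real.sin θ] ![Real.cos θ, Real.sin θ]

noncomputable def sinCosProj (θ : ℝ) : Matrix (Fin 2) (Fin 2) ℝ :=
  vecMulVec ![Real.sin θ, Real.cos θ] ![Real.sin θ, Real.cos θ]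

lemma S_Fmat (θ : ℝ) (z : ℂ) :
    S z (Fmat θ) =
      z • ofRealHom.mapMatrix (cosSinProj θ) + z⁻¹ • ofRealHom.mapMatrix (sinCosProj θ) := by
  ext i j
  fin_cases i <;> fin_cases j <;>
    simp [S, Fmat, cosSinProj, sinCosProj, mul_apply, vecMul_diagonal, -Complex.ofReal_cos,
      -Complex.ofReal_sin] <;> ring

lemma L_Fmat_eq_sum (θ : ℝ) {z : ℂ} (hz : z ≠ 0) (n : ℕ) :
    L n z (Fmat θ) = ∑ k ∈ Icc (-(n : ℤ)) n,
      ((laurentPowCoeff (cosSinProj θ) (sinCosProj θ) n k).trace : ℂ) * z ^ k := by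
  rw [L, S_Fmat, pow_eq_sum_laurentPowCoeff _ _ hz, trace_sum]
  refine sum_congr rfl fun k _ => ?_
  rw [trace_smul, ← map_laurentPowCoeff, RingHom.mapMatrix_apply, ← AddMonoidHom.map_trace,
    smul_eq_mul, mul_comm]
  rfl

lemma cosSinProj_apply_pos_and_sinCosProj_apply_pos {θ : ℝ} (hθ : θ ∈ Set.Ioo 0 (π / 2))
    (i j : Fin 2) :
    0 < cosSinProj θ i j ∧ 0 < sinCosProj θ i j := by
  have hcos : 0 < Real.cos θ := Real.cos_pos_of_mem_Ioo ⟨by linarith [hθ.1, pi_pos], hθ.2⟩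
  have hsin : 0 < Real.sin θ := Real.sin_pos_of_pos_of_lt_pi hθ.1 (by linarith [hθ.2, pi_pos])
  fin_cases i <;> fin_cases j <;> simp [cosSinProj, sinCosProj, vecMulVec_apply, hcos, hsin]

theorem stmt11_general (θ : ℝ) (hθ : θ ∈ Set.Ioo (0 : ℝ) (Real.pi / 4)) (n : ℕ)
    (p : ℤ → ℝ)
    (hp : ∀ z : ℂ, z ≠ 0 →
      L n z (Fmat θ) = ∑ k ∈ Finset.Icc (-(n : ℤ)) (n : ℤ), (p k : ℂ) * z ^ k) :
    ∀ k : ℤ, |k| ≤ (n : ℤ) - 1 →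
      (¬ (k % 2 = (n : ℤ) % 2) → p k = 0) ∧ ((k % 2 = (n : ℤ) % 2) → 0 < p k) := by
  intro k hk
  have hn : 1 ≤ n := by have := abs_nonneg k; omega
  have hkn : |k| ≤ n := by linarith
  have hpk : p k = (laurentPowCoeff (cosSinProj θ) (sinCosProj θ) n k).trace := by
    have := eq_of_forall_sum_mul_zpow_eq
      (fun z hz => (hp z hz).symm.trans (L_Fmat_eq_sum θ hz n)) k (mem_Icc.mpr (abs_le.mp hkn))
    exact_mod_cast this
  refine ⟨fun hpar => ?_, fun hpar => ?_⟩
  · rw [hpk, laurentPowCoeff_eq_zero_of_odd _ _ (Int.odd_iff.mpr (by omega)), trace_zero]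
  · have hproj := cosSinProj_apply_pos_and_sinCosProj_apply_pos
      (θ := θ) ⟨hθ.1, by linarith [hθ.2, pi_pos]⟩
    have hpos := laurentPowCoeff_apply_pos (fun i j => (hproj i j).1) (fun i j => (hproj i j).2)
      hn hkn (Int.even_iff.mpr (by omega))
    rw [hpk]
    exact sum_pos (fun i _ => hpos i i) univ_nonempty

theorem stmt11 (θ : ℝ) (hθ : θ ∈ Set.Ioo (0 : ℝ) (Real.pi / 4)) (n : ℕ) (hn : 1 ≤ n)
    (p : ℤ → ℝ)
    (hp : ∀ z : ℂ, z ≠ 0 →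
      L n z (Fmat θ) = ∑ k ∈ Finset.Icc (-(n : ℤ)) (n : ℤ), (p k : ℂ) * z ^ k) :
    ∀ k : ℤ, |k| ≤ (n : ℤ) - 1 →
      (¬ (k % 2 = (n : ℤ) % 2) → p k = 0) ∧ ((k % 2 = (n : ℤ) % 2) → 0 < p k) :=
  stmt11_general θ hθ n p hp
end

section
/- For θ ∈ [0, π/4) and every n ≥ 1, L_n(z,F_θ) = 2(cos 2θ)^n · T_n((z + z⁻¹)/(2 cos 2θ)) for all z ∈ ℂ \ {0}, where T_n is the n-th Chebyshev polynomial of the first kind. -/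
open Matrix Complex Real

lemma FmatH (θ : ℝ) : (Fmat θ)ᴴ = Fmat θ := by
  ext i j
  fin_cases i <;> fin_cases j <;>
    simp [Fmat, ← Complex.ofReal_cos, ← Complex.ofReal_sin, Complex.conj_ofReal]

lemma diag2 (z : ℂ) : Matrix.diagonal ![z, z⁻¹] = !![z, 0; 0, z⁻¹] := by
  ext i j
  fin_cases i <;> fin_cases j <;> simp [Matrix.diagonal]

lemma Sval (θ : ℝ) (z : ℂ) :
    S z (Fmat θ) =
      !![z * (Real.cos θ:ℂ)^2 + z⁻¹ * (Real.sin θ:ℂ)^2,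
         (z + z⁻¹) * (Real.sin θ:ℂ) * (Real.cos θ:ℂ);
         (z + z⁻¹) * (Real.sin θ:ℂ) * (Real.cos θ:ℂ),
         z * (Real.sin θ:ℂ)^2 + z⁻¹ * (Real.cos θ:ℂ)^2] := by
  rw [S, FmatH, diag2, Fmat, Matrix.mul_fin_two, Matrix.mul_fin_two]
  congr 1 <;> ring

lemma hc2 (θ : ℝ) : (Real.cos (2*θ) : ℂ) = (Real.cos θ:ℂ)^2 - (Real.sin θ:ℂ)^2 := by
  rw [Real.cos_two_mul']; push_cast; ring

lemma hsc (θ : ℝ) : (Real.sin θ:ℂ)^2 + (Real.cos θ:ℂ)^2 = 1 := by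
  exact_mod_cast Real.sin_sq_add_cos_sq θ

lemma key (θ : ℝ) (z : ℂ) (hz : z ≠ 0) :
    S z (Fmat θ) ^ 2 = (z + z⁻¹) • S z (Fmat θ) - ((Real.cos (2*θ) : ℂ))^2 • 1 := by
  have h1 := hsc θ
  have hzz : z * z⁻¹ = 1 := mul_inv_cancel₀ hz
  set Sθ : ℂ := (Real.sin θ:ℂ)
  set Cθ : ℂ := (Real.cos θ:ℂ)
  rw [pow_two, Sval, hc2, Matrix.mul_fin_two, Matrix.one_fin_two]
  ext i j
  fin_cases i <;> fin_cases j <;>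
      simp only [Matrix.smul_apply, Matrix.sub_apply, Matrix.cons_val',
        Matrix.cons_val_zero, Matrix.cons_val_one, Matrix.head_cons, Matrix.head_fin_const,
        Matrix.empty_val', Matrix.cons_val_fin_one, Matrix.of_apply, smul_eq_mul,
        Fin.zero_eta, Fin.mk_one]
  · linear_combination (z^2*Cθ^2 + z⁻¹^2*Sθ^2 + Sθ^2 + Cθ^2) * h1 +
      (4*Sθ^2*Cθ^2 - Sθ^2 - Cθ^2) * hzz
  · linear_combination ((z+z⁻¹)^2*Sθ*Cθ) * h1
  · linear_combination ((z+z⁻¹)^2*Sθ*Cθ) * h1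
  · linear_combination (z^2*Sθ^2 + z⁻¹^2*Cθ^2 + Sθ^2 + Cθ^2) * h1 +
      (4*Sθ^2*Cθ^2 - Sθ^2 - Cθ^2) * hzz

lemma trS (θ : ℝ) (z : ℂ) : (S z (Fmat θ)).trace = z + z⁻¹ := by
  rw [Sval, Matrix.trace_fin_two_of]
  linear_combination (z + z⁻¹) * hsc θ

theorem stmt12 (θ : ℝ) (hθ : θ ∈ Set.Ico (0 : ℝ) (Real.pi / 4)) (n : ℕ) (hn : 1 ≤ n)
    (z : ℂ) (hz : z ≠ 0) :
    L n z (Fmat θ) = 2 * ((Real.cos (2 * θ) : ℂ)) ^ n *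
      (Polynomial.Chebyshev.T ℂ n).eval ((z + z⁻¹) / (2 * (Real.cos (2 * θ) : ℂ))) := by
  have hcpos : 0 < Real.cos (2 * θ) := by
    apply Real.cos_pos_of_mem_Ioo
    constructor <;> [nlinarith [Real.pi_pos, hθ.1, hθ.2]; nlinarith [hθ.1, hθ.2]]
  have hc0 : ((Real.cos (2*θ) : ℂ)) ≠ 0 := by
    exact_mod_cast hcpos.ne'
  set c : ℂ := (Real.cos (2*θ) : ℂ) with hc
  set u : ℂ := (z + z⁻¹) / (2 * c) with hu
  have h2cu : 2 * c * u = z + z⁻¹ := by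
    rw [hu]; field_simp
  clear hn
  induction n using Nat.twoStepInduction with
  | zero =>
      simp [L, Polynomial.Chebyshev.T_zero]
  | one =>
      rw [L, pow_one, trS, ← h2cu]
      push_cast
      rw [Polynomial.Chebyshev.T_one, Polynomial.eval_X]
      ring
  | more m ih ih2 =>
      have hL : L (m+2) z (Fmat θ) = (z + z⁻¹) * L (m+1) z (Fmat θ) - c^2 * L m z (Fmat θ) := by
        simp only [L]
        calc (S z (Fmat θ) ^ (m+2)).trace
            = (S z (Fmat θ) ^ m * S z (Fmat θ) ^ 2).trace := by
              rw [← pow_add]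
          _ = (S z (Fmat θ) ^ m * ((z + z⁻¹) • S z (Fmat θ) - c^2 • 1)).trace := by
              rw [key θ z hz]
          _ = (z + z⁻¹) * (S z (Fmat θ) ^ (m+1)).trace - c^2 * (S z (Fmat θ) ^ m).trace := by
              rw [Matrix.mul_sub, Matrix.trace_sub, Matrix.mul_smul, Matrix.mul_smul,
                Matrix.trace_smul, Matrix.trace_smul, mul_one,
                smul_eq_mul, smul_eq_mul,
                show S z (Fmat θ) ^ (m+1) = S z (Fmat θ) ^ m * S z (Fmat θ) from pow_succ _ _]
      rw [hL, ih, ih2]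
      have hT : Polynomial.Chebyshev.T ℂ ((m:ℤ) + 2) =
          2 * Polynomial.X * Polynomial.Chebyshev.T ℂ ((m:ℤ) + 1) -
            Polynomial.Chebyshev.T ℂ (m:ℤ) := Polynomial.Chebyshev.T_add_two ℂ m
      push_cast
      rw [hT]
      simp only [Polynomial.eval_sub, Polynomial.eval_mul, Polynomial.eval_ofNat,
        Polynomial.eval_X]
      rw [← h2cu]
      ring
end

section
/- For every n ≥ 1, the preimage of the interval [-1,1] under the Chebyshev polynomial T_n, as a map ℂ → ℂ, equals [-1,1]: {ζ ∈ ℂ : T_n(ζ) ∈ [-1,1] ⊂ ℝ} = [-1,1]. -/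
theorem stmt17 (n : ℕ) (hn : 1 ≤ n) :
    (fun ζ : ℂ => (Polynomial.Chebyshev.T ℂ n).eval ζ) ⁻¹'
        ((fun r : ℝ => (r : ℂ)) '' Set.Icc (-1 : ℝ) 1) =
      (fun r : ℝ => (r : ℂ)) '' Set.Icc (-1 : ℝ) 1 := by
  ext ζ
  simp only [Set.mem_preimage, Set.mem_image]
  constructor
  · rintro ⟨r, hr, hTr⟩
    obtain ⟨z, rfl⟩ := Complex.cos_surjective ζ
    rw [Polynomial.Chebyshev.T_complex_cos] at hTr
    set w : ℂ := ((n : ℤ) : ℂ) * z with hw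
    have hcos : (r : ℂ) = Complex.cos ↑w.re * Complex.cosh ↑w.im -
        Complex.sin ↑w.re * Complex.sinh ↑w.im * Complex.I := by
      rw [hTr]; exact Complex.cos_eq w
    have hre : Real.cos w.re * Real.cosh w.im = r := by
      have := congrArg Complex.re hcos
      simpa [Complex.cos_ofReal_re, Complex.cosh_ofReal_re, Complex.sin_ofReal_re,
        Complex.sinh_ofReal_re, Complex.cos_ofReal_im, Complex.cosh_ofReal_im,
        Complex.sin_ofReal_im, Complex.sinh_ofReal_im, Complex.mul_re, Complex.mul_im,
        Complex.sub_re, Complex.I_re, Complex.I_im] using this.symm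
    have him : Real.sin w.re * Real.sinh w.im = 0 := by
      have := congrArg Complex.im hcos
      simpa [Complex.cos_ofReal_re, Complex.cosh_ofReal_re, Complex.sin_ofReal_re,
        Complex.sinh_ofReal_re, Complex.cos_ofReal_im, Complex.cosh_ofReal_im,
        Complex.sin_ofReal_im, Complex.sinh_ofReal_im, Complex.mul_re, Complex.mul_im,
        Complex.sub_im, Complex.I_re, Complex.I_im] using this
    have hwim : w.im = 0 := by
      by_contra hb
      have hsinh : Real.sinh w.im ≠ 0 := by
        simpa [Real.sinh_eq_zero] using hb
      have hsin : Real.sin w.re = 0 := (mul_eq_zero.1 him).resolve_right hsinh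
      have hcosh : 1 < Real.cosh w.im := Real.one_lt_cosh.2 hb
      have hc2 : Real.cos w.re ^ 2 = 1 := by
        nlinarith [Real.sin_sq_add_cos_sq w.re]
      have hr2 : r ^ 2 = Real.cosh w.im ^ 2 := by
        rw [← hre, mul_pow, hc2, one_mul]
      nlinarith [hcosh, hr.1, hr.2]
    have hzim : z.im = 0 := by
      have h1 : w.im = (n : ℝ) * z.im := by
        simp [hw, Complex.mul_im]
      rw [h1] at hwim
      have hn' : (n : ℝ) ≠ 0 := by positivity
      exact (mul_eq_zero.1 hwim).resolve_left hn'
    refine ⟨Real.cos z.re, ⟨Real.neg_one_le_cos _, Real.cos_le_one _⟩, ?_⟩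
    rw [Complex.ofReal_cos]
    congr 1
    exact Complex.ext_iff.2 ⟨Complex.ofReal_re _, by simp [hzim]⟩
  · rintro ⟨r, hr, rfl⟩
    obtain ⟨θ, _, hθ⟩ := Real.surjOn_cos hr
    refine ⟨Real.cos ((n : ℝ) * θ), ⟨Real.neg_one_le_cos _, Real.cos_le_one _⟩, ?_⟩
    rw [← hθ, Complex.ofReal_cos, Complex.ofReal_cos,
      Polynomial.Chebyshev.T_complex_cos]
    push_cast
    ring_nf
end
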